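/- arXiv:1805.09711 — 3 statements merged into one kernel-verified Lean document; each statement's English description precedes it below -/
import Mathlib

section
/- Let β > 0, λ ≠ 0, p = -√β(1+6λ-3λ²)/(1+3λ²), q = -√β(1-6λ-3λ²)/(1+3λ²), and φ₀ ∈ ℝ. Then the function u(x,t) = (1/2)(p-q)² sech²((1/2)(p-q)(x+(p+q)t) + φ₀) satisfies the scalar Boussinesq equation u_tt - 4β u_xx + (1/3) u_xxxx + (u²)_xx = 0. -/
/-!
The solution is a travelling wave `u = 2k² S(k(x + ct) + φ₀)` with `k = (p - q)/2`, `c = p + q`.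
For such a wave the equation reduces to `(c² - 4β) S'' + (k²/3) S'''' + 2k² (S²)'' = 0`.
The profile `S = sech²` satisfies `S'' = 4S - 6S²`, whence `S'''' = 4S'' - 6(S²)''`, and the
bracket vanishes exactly when `c² = 4β - 4k²/3`, i.e. when `p² + pq + q² = 3β`.
-/

open Real

theorem iteratedDeriv_comp_mul_add {𝕜 F : Type*} [NontriviallyNormedField 𝕜]
    [NormedAddCommGroup F] [NormedSpace 𝕜 F] (n : ℕ) (f : 𝕜 → F) (k b : 𝕜) :
    iteratedDeriv n (fun x => f (k * x + b)) = fun x => k ^ n • iteratedDeriv n f (k * x + b) := by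
  induction n with
  | zero => simp
  | succ n ih =>
    funext x
    have hcomp : deriv (fun x => iteratedDeriv n f (k * x + b)) x
        = k • deriv (iteratedDeriv n f) (k * x + b) := by
      rw [deriv_comp_mul_left k (fun y => iteratedDeriv n f (y + b)), deriv_comp_add_const]
    rw [iteratedDeriv_succ, ih, iteratedDeriv_succ, deriv_fun_const_smul_field, hcomp,
      smul_smul, pow_succ]

theorem iteratedDeriv_four_of_iteratedDeriv_two {𝕜 : Type*} [NontriviallyNormedField 𝕜]
    {S : 𝕜 → 𝕜} (hS : ContDiff 𝕜 2 S) {a b : 𝕜}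
    (h : iteratedDeriv 2 S = fun y => a * S y + b * S y ^ 2) (y : 𝕜) :
    iteratedDeriv 4 S y = a * iteratedDeriv 2 S y + b * iteratedDeriv 2 (fun z => S z ^ 2) y := by
  have hS2 : ContDiff 𝕜 2 fun z => S z ^ 2 := hS.pow 2
  have h4 : iteratedDeriv 4 S = iteratedDeriv 2 (iteratedDeriv 2 S) := by
    simp only [iteratedDeriv_eq_iterate, ← Function.iterate_add_apply]
  rw [h4]
  conv_lhs => rw [h]
  rw [iteratedDeriv_fun_add (contDiff_const.mul hS).contDiffAt (contDiff_const.mul hS2).contDiffAt,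
    iteratedDeriv_const_mul_field, iteratedDeriv_const_mul_field]

theorem boussinesq_of_travelingWave {β k c φ : ℝ} {S : ℝ → ℝ}
    (hS : ∀ y, iteratedDeriv 4 S y
      = 4 * iteratedDeriv 2 S y - 6 * iteratedDeriv 2 (fun z => S z ^ 2) y)
    (hc : c ^ 2 = 4 * β - 4 / 3 * k ^ 2) (u : ℝ → ℝ → ℝ)
    (hu : ∀ x t, u x t = 2 * k ^ 2 * S (k * (x + c * t) + φ)) :
    ∀ x t, iteratedDeriv 2 (fun t' => u x t') t
      - 4 * β * iteratedDeriv 2 (fun x' => u x' t) x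
      + (1/3) * iteratedDeriv 4 (fun x' => u x' t) x
      + iteratedDeriv 2 (fun x' => (u x' t) ^ 2) x = 0 := by
  intro x t
  have hu_t : (fun t' => u x t') = fun t' => 2 * k ^ 2 * S (k * c * t' + (k * x + φ)) := by
    funext t'; rw [hu]; ring_nf
  have hu_x : (fun x' => u x' t) = fun x' => 2 * k ^ 2 * S (k * x' + (k * c * t + φ)) := by
    funext x'; rw [hu]; ring_nf
  have hu_x_sq : (fun x' => u x' t ^ 2)
      = fun x' => 4 * k ^ 4 * (fun z => S z ^ 2) (k * x' + (k * c * t + φ)) := by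
    funext x'; rw [hu]; ring_nf
  have harg : k * c * t + (k * x + φ) = k * x + (k * c * t + φ) := by ring
  rw [hu_t, hu_x, hu_x_sq, iteratedDeriv_const_mul_field, iteratedDeriv_const_mul_field,
    iteratedDeriv_const_mul_field, iteratedDeriv_const_mul_field, iteratedDeriv_comp_mul_add,
    iteratedDeriv_comp_mul_add, iteratedDeriv_comp_mul_add,
    iteratedDeriv_comp_mul_add 2 (fun z => S z ^ 2)]
  simp only [smul_eq_mul, harg, hS]
  linear_combination 2 * k ^ 4 * iteratedDeriv 2 S (k * x + (k * c * t + φ)) * hc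

noncomputable def sechSq (y : ℝ) : ℝ := (cosh y)⁻¹ ^ 2

theorem contDiff_sechSq : ContDiff ℝ ⊤ sechSq :=
  (contDiff_cosh.inv fun y => (cosh_pos y).ne').pow 2

theorem hasDerivAt_sechSq (y : ℝ) :
    HasDerivAt sechSq (-2 * sinh y * (cosh y)⁻¹ ^ 3) y := by
  refine (((hasDerivAt_cosh y).inv (cosh_pos y).ne').pow 2).congr_deriv ?_
  have := (cosh_pos y).ne'
  simp only [Pi.inv_apply, Nat.cast_ofNat, Nat.reduceSub]
  field_simp

theorem hasDerivAt_deriv_sechSq (y : ℝ) :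
    HasDerivAt (fun z => -2 * sinh z * (cosh z)⁻¹ ^ 3) (4 * sechSq y - 6 * sechSq y ^ 2) y := by
  refine (((hasDerivAt_sinh y).const_mul (-2 : ℝ)).mul
    (((hasDerivAt_cosh y).inv (cosh_pos y).ne').pow 3)).congr_deriv ?_
  have := (cosh_pos y).ne'
  simp only [sechSq, Pi.inv_apply, Pi.pow_apply, Nat.cast_ofNat, Nat.reduceSub]
  field_simp
  linear_combination 6 * sinh_sq y

theorem iteratedDeriv_two_sechSq :
    iteratedDeriv 2 sechSq = fun y => 4 * sechSq y + -6 * sechSq y ^ 2 := by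
  have hderiv : deriv sechSq = fun z => -2 * sinh z * (cosh z)⁻¹ ^ 3 :=
    funext fun y => (hasDerivAt_sechSq y).deriv
  rw [iteratedDeriv_succ, iteratedDeriv_one, hderiv]
  funext y
  rw [(hasDerivAt_deriv_sechSq y).deriv]
  ring

theorem sq_add_mul_add_sq_eq_three_mul {β lam p q : ℝ} (hβ : 0 ≤ β)
    (hp : p = -√β * (1 + 6 * lam - 3 * lam ^ 2) / (1 + 3 * lam ^ 2))
    (hq : q = -√β * (1 - 6 * lam - 3 * lam ^ 2) / (1 + 3 * lam ^ 2)) :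
    p ^ 2 + p * q + q ^ 2 = 3 * β := by
  have hden : (1 : ℝ) + 3 * lam ^ 2 ≠ 0 := by positivity
  rw [hp, hq]
  field_simp
  linear_combination 3 * (1 + 3 * lam ^ 2) ^ 2 * sq_sqrt hβ

theorem one_soliton_solves_boussinesq_general (β lam : ℝ) (hβ : 0 < β)
    (p q φ₀ : ℝ)
    (hp : p = -Real.sqrt β * (1 + 6 * lam - 3 * lam ^ 2) / (1 + 3 * lam ^ 2))
    (hq : q = -Real.sqrt β * (1 - 6 * lam - 3 * lam ^ 2) / (1 + 3 * lam ^ 2))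
    (u : ℝ → ℝ → ℝ)
    (hu : ∀ x t, u x t = (1/2) * (p - q) ^ 2 *
      (1 / Real.cosh ((1/2) * (p - q) * (x + (p + q) * t) + φ₀)) ^ 2) :
    ∀ x t,
      iteratedDeriv 2 (fun t' => u x t') t
        - 4 * β * iteratedDeriv 2 (fun x' => u x' t) x
        + (1/3) * iteratedDeriv 4 (fun x' => u x' t) x
        + iteratedDeriv 2 (fun x' => (u x' t) ^ 2) x = 0 := by
  have hS (y : ℝ) := iteratedDeriv_four_of_iteratedDeriv_two (contDiff_sechSq.of_le le_top)
    iteratedDeriv_two_sechSq y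
  have hc : (p + q) ^ 2 = 4 * β - 4 / 3 * ((1/2) * (p - q)) ^ 2 := by
    linear_combination 4 / 3 * sq_add_mul_add_sq_eq_three_mul hβ.le hp hq
  refine boussinesq_of_travelingWave (φ := φ₀) (fun y => by linear_combination hS y) hc u
    fun x t => ?_
  rw [hu, sechSq, one_div]
  ring

/-- The 1-soliton in sech² form solves the scalar "good" Boussinesq equation. -/
theorem one_soliton_solves_boussinesq (β lam : ℝ) (hβ : 0 < β) (hlam : lam ≠ 0)
    (p q φ₀ : ℝ)
    (hp : p = -Real.sqrt β * (1 + 6 * lam - 3 * lam ^ 2) / (1 + 3 * lam ^ 2))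
    (hq : q = -Real.sqrt β * (1 - 6 * lam - 3 * lam ^ 2) / (1 + 3 * lam ^ 2))
    (u : ℝ → ℝ → ℝ)
    (hu : ∀ x t, u x t = (1/2) * (p - q) ^ 2 *
      (1 / Real.cosh ((1/2) * (p - q) * (x + (p + q) * t) + φ₀)) ^ 2) :
    ∀ x t,
      iteratedDeriv 2 (fun t' => u x t') t
        - 4 * β * iteratedDeriv 2 (fun x' => u x' t) x
        + (1/3) * iteratedDeriv 4 (fun x' => u x' t) x
        + iteratedDeriv 2 (fun x' => (u x' t) ^ 2) x = 0 :=
  one_soliton_solves_boussinesq_general β lam hβ p q φ₀ hp hq u hu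
end

section
/- The linear R-matrix R(λᵢ,λⱼ) of the vector Boussinesq equation, given by R₁₁ = (λᵢ-λⱼ)(1-λᵢ-λⱼ-3λᵢλⱼ)/D, R₁₂ = 2λᵢ(1+3λⱼ²)/D, R₂₁ = 2λⱼ(1+3λᵢ²)/D, R₂₂ = (λⱼ-λᵢ)(1+λᵢ+λⱼ-3λᵢλⱼ)/D where D = (λᵢ+λⱼ)(1-λᵢ+λⱼ+3λᵢλⱼ), satisfies the parametrized Yang–Baxter-type equation: acting on (ℝ²)⊗³ via the standard embeddings R₁₂, R₁₃, R₂₃ (with spectral parameters (λ₁,λ₂), (λ₁,λ₃), (λ₂,λ₃) respectively), one has R₁₂(λ₁,λ₂) R₁₃(λ₁,λ₃) R₂₃(λ₂,λ₃) = R₂₃(λ₂,λ₃) R₁₃(λ₁,λ₃) R₁₂(λ₁,λ₂), for generic λ₁, λ₂, λ₃ such that all denominators are nonzero. -/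
/-- The R-matrix of the vector Boussinesq equation. -/
noncomputable def BsqR (li lj : ℝ) : Matrix (Fin 2) (Fin 2) ℝ :=
  let D := (li + lj) * (1 - li + lj + 3 * li * lj)
  !![(li - lj) * (1 - li - lj - 3 * li * lj) / D, 2 * li * (1 + 3 * lj ^ 2) / D;
     2 * lj * (1 + 3 * li ^ 2) / D, (lj - li) * (1 + li + lj - 3 * li * lj) / D]

/-- Embedding of a 2×2 matrix acting on the tensor factors `a` and `b` (with `a ≠ b`)
of `(ℝ²)^{⊗3} ≅ ℝ²⊗ℝ²⊗ℝ²`, realized on the three ℝ²-slots indexed by `Fin 3`,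
acting as the identity on the remaining slot. -/
def embedR (a b : Fin 3) (M : Matrix (Fin 2) (Fin 2) ℝ) :
    Matrix (Fin 3 × Fin 2) (Fin 3 × Fin 2) ℝ :=
  Matrix.of fun r c =>
    (if r.2 = c.2 then (1 : ℝ) else 0) *
      (if r.1 = a ∧ c.1 = a then M 0 0
       else if r.1 = a ∧ c.1 = b then M 0 1
       else if r.1 = b ∧ c.1 = a then M 1 0
       else if r.1 = b ∧ c.1 = b then M 1 1
       else if r.1 = c.1 then 1 else 0)

/-!
`embedR a b M` is `P ⊗ₖ 1`, where `P` is the 3×3 matrix acting as `M` on the coordinates `a, b` and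
as the identity on the third one, so the Yang–Baxter equation is the Kronecker product of a 3×3
equation with `1`. Comparing entries, the 3×3 equation amounts to seven scalar relations between the
entries of `R(λ₁,λ₂)`, `R(λ₁,λ₃)`, `R(λ₂,λ₃)`; for the Boussinesq R-matrix these are rational
identities in `λ₁, λ₂, λ₃`, verified by clearing the three denominators.
-/

open scoped Kronecker

namespace Matrix

def embedAt {n R : Type*} [DecidableEq n] [Zero R] [One R] (a b : n)
    (M : Matrix (Fin 2) (Fin 2) R) : Matrix n n R :=
  of fun i j =>
    if i = a ∧ j = a then M 0 0
    else if i = a ∧ j = b then M 0 1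
    else if i = b ∧ j = a then M 1 0
    else if i = b ∧ j = b then M 1 1
    else if i = j then 1 else 0

section FinThree

variable {R : Type*}

theorem embedAt_zero_one [Zero R] [One R] (M : Matrix (Fin 2) (Fin 2) R) :
    embedAt 0 1 M = !![M 0 0, M 0 1, 0; M 1 0, M 1 1, 0; 0, 0, 1] := by
  ext i j; fin_cases i <;> fin_cases j <;> rfl

theorem embedAt_zero_two [Zero R] [One R] (M : Matrix (Fin 2) (Fin 2) R) :
    embedAt 0 2 M = !![M 0 0, 0, M 0 1; 0, 1, 0; M 1 0, 0, M 1 1] := by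
  ext i j; fin_cases i <;> fin_cases j <;> rfl

theorem embedAt_one_two [Zero R] [One R] (M : Matrix (Fin 2) (Fin 2) R) :
    embedAt 1 2 M = !![1, 0, 0; 0, M 0 0, M 0 1; 0, M 1 0, M 1 1] := by
  ext i j; fin_cases i <;> fin_cases j <;> rfl

/-- The entries `(0,0)` and `(2,2)` of the two sides agree identically; `hij` is entry `(i,j)`. -/
theorem yangBaxter_embedAt_of [CommRing R] (A B C : Matrix (Fin 2) (Fin 2) R)
    (h01 : A 0 1 * C 0 0 + A 0 0 * B 0 1 * C 1 0 = B 0 0 * A 0 1)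
    (h02 : A 0 1 * C 0 1 + A 0 0 * B 0 1 * C 1 1 = B 0 1)
    (h10 : A 1 0 * B 0 0 = C 0 1 * B 1 0 * A 0 0 + C 0 0 * A 1 0)
    (h11 : A 1 1 * C 0 0 + A 1 0 * B 0 1 * C 1 0 = C 0 1 * B 1 0 * A 0 1 + C 0 0 * A 1 1)
    (h12 : A 1 1 * C 0 1 + A 1 0 * B 0 1 * C 1 1 = C 0 1 * B 1 1)
    (h20 : B 1 0 = C 1 1 * B 1 0 * A 0 0 + C 1 0 * A 1 0)
    (h21 : B 1 1 * C 1 0 = C 1 1 * B 1 0 * A 0 1 + C 1 0 * A 1 1) :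
    (embedAt 0 1 A * embedAt 0 2 B * embedAt 1 2 C : Matrix (Fin 3) (Fin 3) R) =
      embedAt 1 2 C * embedAt 0 2 B * embedAt 0 1 A := by
  simp only [embedAt_zero_one, embedAt_zero_two, embedAt_one_two, mul_fin_three]
  ext i j
  fin_cases i <;> fin_cases j <;>
    simp only [of_apply, cons_val', cons_val, cons_val_zero, cons_val_one, cons_val_fin_one,
      Fin.isValue, Fin.zero_eta, Fin.mk_one, Fin.reduceFinMk] <;>
    grind

end FinThree

end Matrix

open Matrix

theorem embedR_eq_embedAt_kronecker (a b : Fin 3) (M : Matrix (Fin 2) (Fin 2) ℝ) :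
    embedR a b M = embedAt a b M ⊗ₖ 1 := by
  ext r c
  simp only [embedR, embedAt, kroneckerMap_apply, of_apply, one_apply, mul_comm]

/-- The parametrized Yang–Baxter equation for the linear R-matrix of the
vector Boussinesq equation. -/
theorem BsqR_yang_baxter (l₁ l₂ l₃ : ℝ)
    (h12 : (l₁ + l₂) * (1 - l₁ + l₂ + 3 * l₁ * l₂) ≠ 0)
    (h13 : (l₁ + l₃) * (1 - l₁ + l₃ + 3 * l₁ * l₃) ≠ 0)
    (h23 : (l₂ + l₃) * (1 - l₂ + l₃ + 3 * l₂ * l₃) ≠ 0) :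
    embedR 0 1 (BsqR l₁ l₂) * embedR 0 2 (BsqR l₁ l₃) * embedR 1 2 (BsqR l₂ l₃) =
      embedR 1 2 (BsqR l₂ l₃) * embedR 0 2 (BsqR l₁ l₃) * embedR 0 1 (BsqR l₁ l₂) := by
  simp only [embedR_eq_embedAt_kronecker, ← mul_kronecker_mul, mul_one]
  congr 1
  apply yangBaxter_embedAt_of <;>
  · simp only [BsqR, of_apply, cons_val', cons_val_zero, cons_val_one, empty_val',
      cons_val_fin_one]
    -- `field_simp` would rewrite `3 * l₁ * l₂` to `l₁ * 3 * l₂` inside the denominators, which then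
    -- no longer match `h12`, `h13`, `h23`; as atoms they stay recognizably nonzero.
    generalize hD₁₂ : (l₁ + l₂) * (1 - l₁ + l₂ + 3 * l₁ * l₂) = D₁₂ at h12 ⊢
    generalize hD₁₃ : (l₁ + l₃) * (1 - l₁ + l₃ + 3 * l₁ * l₃) = D₁₃ at h13 ⊢
    generalize hD₂₃ : (l₂ + l₃) * (1 - l₂ + l₃ + 3 * l₂ * l₃) = D₂₃ at h23 ⊢
    field_simp
    subst hD₁₂ hD₁₃ hD₂₃
    ring
end

section
/- Let N ∈ ℕ, and let Ω: ℝ² → GL_N(ℝ) be differentiable with Ω_x = -χKθ for differentiable matrix functions χ (N×n), θ (m×N) and a constant n×m matrix K. Then for φ = φ₀ - θΩ⁻¹χ (with φ₀ an m×n matrix function), one has tr(Kφ) = tr(Kφ₀) + (log det Ω)_x at every point where det Ω > 0. -/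
/-!
Jacobi's formula `(log det Ω)_x = tr(Ω⁻¹ Ω_x)`, combined with `Ω_x = -χKθ` and cyclicity of the
trace, gives `(log det Ω)_x = -tr(Ω⁻¹χKθ) = -tr(K θΩ⁻¹χ) = tr(Kφ) - tr(Kφ₀)`.
Jacobi's formula itself comes from the Leibniz expansion: differentiating `∏ⱼ M (σ j) j` one column
at a time gives `∑ᵢ det (M with column i replaced by M'ᵢ)`, which is `tr(adj M · M')` by Cramer's rule.
-/

open Matrix Finset

namespace Matrix

variable {ι : Type*} [Fintype ι] [DecidableEq ι]

section Algebra

variable {R : Type*} [CommRing R]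

theorem det_updateCol_eq_sum_perm (A : Matrix ι ι R) (i : ι) (b : ι → R) :
    (A.updateCol i b).det =
      ∑ σ : Equiv.Perm ι, (Equiv.Perm.sign σ : R) * ((∏ j ∈ univ.erase i, A (σ j) j) * b (σ i)) := by
  rw [det_apply']
  refine sum_congr rfl fun σ _ => ?_
  rw [← mul_prod_erase univ _ (mem_univ i), updateCol_self, mul_comm (b (σ i))]
  congr 2
  exact prod_congr rfl fun j hj => updateCol_ne (ne_of_mem_erase hj)

theorem trace_adjugate_mul (A B : Matrix ι ι R) :
    (A.adjugate * B).trace = ∑ i, (A.updateCol i fun k => B k i).det := by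
  simp only [← cramer_apply, cramer_eq_adjugate_mulVec]
  simp [trace, mul_apply, mulVec, dotProduct]

end Algebra

section Calculus

variable {𝕜 : Type*} [NontriviallyNormedField 𝕜] {M : 𝕜 → Matrix ι ι 𝕜} {M' : Matrix ι ι 𝕜} {x : 𝕜}

theorem hasDerivAt_det_sum_updateCol (h : ∀ i j, HasDerivAt (fun y => M y i j) (M' i j) x) :
    HasDerivAt (fun y => (M y).det) (∑ i, ((M x).updateCol i fun k => M' k i).det) x := by
  simp_rw [det_updateCol_eq_sum_perm, det_apply']
  rw [sum_comm]
  refine HasDerivAt.fun_sum fun σ _ => ?_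
  simpa only [smul_eq_mul, mul_sum] using
    (HasDerivAt.fun_finsetProd fun i _ => h (σ i) i).const_mul (Equiv.Perm.sign σ : 𝕜)

theorem hasDerivAt_det (h : ∀ i j, HasDerivAt (fun y => M y i j) (M' i j) x) :
    HasDerivAt (fun y => (M y).det) ((M x).adjugate * M').trace x := by
  rw [trace_adjugate_mul]
  exact hasDerivAt_det_sum_updateCol h

end Calculus

theorem hasDerivAt_log_det {M : ℝ → Matrix ι ι ℝ} {M' : Matrix ι ι ℝ} {x : ℝ}
    (h : ∀ i j, HasDerivAt (fun y => M y i j) (M' i j) x) (hdet : (M x).det ≠ 0) :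
    HasDerivAt (fun y => Real.log (M y).det) ((M x)⁻¹ * M').trace x := by
  convert (hasDerivAt_det h).log hdet using 1
  rw [inv_def, Ring.inverse_eq_inv, smul_mul, trace_smul, smul_eq_mul, div_eq_inv_mul]

end Matrix

/-- The τ-function relation: for `φ = φ₀ - θ Ω⁻¹ χ` with `Ω_x = -χKθ`,
`tr(Kφ) = tr(Kφ₀) + (log det Ω)_x` wherever `det Ω > 0`. -/
theorem trace_log_det_relation (N n m : ℕ)
    (K : Matrix (Fin n) (Fin m) ℝ)
    (θ : ℝ → Matrix (Fin m) (Fin N) ℝ)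
    (χ : ℝ → Matrix (Fin N) (Fin n) ℝ)
    (φ₀ : ℝ → Matrix (Fin m) (Fin n) ℝ)
    (Ω : ℝ → Matrix (Fin N) (Fin N) ℝ)
    (hΩdiff : ∀ i j, Differentiable ℝ (fun x => Ω x i j))
    (hΩx : ∀ x (i j : Fin N), deriv (fun y => Ω y i j) x = (-(χ x * K * θ x)) i j)
    (φ : ℝ → Matrix (Fin m) (Fin n) ℝ)
    (hφ : ∀ x, φ x = φ₀ x - θ x * (Ω x)⁻¹ * χ x) :
    ∀ x, 0 < (Ω x).det →
      (K * φ x).trace = (K * φ₀ x).trace +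
        deriv (fun y => Real.log ((Ω y).det)) x := by
  intro x hdet
  have hΩ' : ∀ i j, HasDerivAt (fun y => Ω y i j) ((-(χ x * K * θ x)) i j) x := fun i j =>
    hΩx x i j ▸ (hΩdiff i j x).hasDerivAt
  have cyclic : ((Ω x)⁻¹ * -(χ x * K * θ x)).trace = -(K * (θ x * (Ω x)⁻¹ * χ x)).trace := by
    rw [mul_neg, trace_neg, Matrix.mul_assoc, ← Matrix.mul_assoc (Ω x)⁻¹, trace_mul_comm,
      Matrix.mul_assoc K, ← Matrix.mul_assoc (θ x)]
  rw [(hasDerivAt_log_det hΩ' hdet.ne').deriv, cyclic, hφ, Matrix.mul_sub, trace_sub]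
  ring
end
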